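/- In the setting of the weighted Hoffman cross-intersecting bound, if equality √(|Y|·|Z|) = (λ_b/(k+λ_b))·n holds, then |Y| = |Z|. -/

import Mathlib

/-!
Write `a = |Y|`, `b = |Z|` and let `v`, `w` be the projections of the indicator vectors of `Y`, `Z`
onto `j^⊥`. Since `A` preserves `j^⊥` and its eigenvalues there are bounded by `λ` in absolute
value, Cauchy–Schwarz and `χ_Yᵀ A χ_Z ≤ 0` give `k a b / n ≤ λ ‖v‖ ‖w‖`, i.e.
`k² a b ≤ λ² (n - a) (n - b)`. By AM-GM the right-hand side is at most `λ² (n - √(ab))²`, which is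
the Hoffman bound `√(ab) ≤ λ n / (k + λ)`; equality there forces equality in AM-GM, i.e. `a = b`.
-/

open Matrix
open scoped RealInnerProductSpace

namespace LinearMap.IsSymmetric

open Module End

variable {E : Type*} [NormedAddCommGroup E] [InnerProductSpace ℝ E] {T : E →ₗ[ℝ] E}

theorem apply_mem_orthogonal_span_singleton (hT : T.IsSymmetric) {u : E} {k : ℝ}
    (hu : T u = k • u) {x : E} (hx : x ∈ (ℝ ∙ u)ᗮ) : T x ∈ (ℝ ∙ u)ᗮ := by
  rw [Submodule.mem_orthogonal_singleton_iff_inner_right] at hx ⊢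
  rw [← hT, hu, real_inner_smul_left, hx, mul_zero]

variable [FiniteDimensional ℝ E]

theorem norm_apply_le_of_forall_hasEigenvalue (hT : T.IsSymmetric) {c : ℝ}
    (hc : ∀ μ, HasEigenvalue T μ → |μ| ≤ c) (x : E) : ‖T x‖ ≤ c * ‖x‖ := by
  rcases eq_or_ne x 0 with rfl | hx
  · simp
  have : Nontrivial E := nontrivial_of_ne x 0 hx
  set b := hT.eigenvectorBasis rfl
  set μ := hT.eigenvalues rfl
  have hμ (i) : |μ i| ≤ c := hc _ (hT.hasEigenvalue_eigenvalues rfl i)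
  have hsq : ‖T x‖ ^ 2 ≤ (c * ‖x‖) ^ 2 := calc
    ‖T x‖ ^ 2 = ∑ i, (|μ i| * |b.repr x i|) ^ 2 := by
      rw [← b.repr.norm_map, EuclideanSpace.norm_sq_eq]
      simp [b, μ, hT.eigenvectorBasis_apply_self_apply]
    _ ≤ ∑ i, (c * |b.repr x i|) ^ 2 := by gcongr with i; exact hμ i
    _ = (c * ‖x‖) ^ 2 := by
      rw [mul_pow, ← b.repr.norm_map x, EuclideanSpace.norm_sq_eq, Finset.mul_sum]
      simp [mul_pow]
  have hc0 : 0 ≤ c := (abs_nonneg _).trans (hμ ⟨0, finrank_pos⟩)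
  exact le_of_sq_le_sq hsq (by positivity)

theorem norm_apply_le_of_mem_invariant (hT : T.IsSymmetric) {S : Submodule ℝ E}
    (hS : ∀ x ∈ S, T x ∈ S) {c : ℝ}
    (hc : ∀ (μ : ℝ) (x : E), x ∈ S → x ≠ 0 → T x = μ • x → |μ| ≤ c) {x : E} (hx : x ∈ S) :
    ‖T x‖ ≤ c * ‖x‖ := by
  refine (hT.restrict_invariant hS).norm_apply_le_of_forall_hasEigenvalue (fun μ hμ ↦ ?_) ⟨x, hx⟩
  obtain ⟨y, hy⟩ := hμ.exists_hasEigenvector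
  exact hc μ y y.2 (by simpa using hy.2) (congrArg Subtype.val (mem_eigenspace_iff.mp hy.1))

end LinearMap.IsSymmetric

section

variable {ι R : Type*} [Fintype ι]

theorem indicator_one_dotProduct [NonAssocSemiring R] (s : Finset ι) (x : ι → R) :
    (s : Set ι).indicator 1 ⬝ᵥ x = ∑ i ∈ s, x i := by
  classical
  simp [dotProduct, Set.indicator_apply, Finset.sum_ite_mem]

theorem indicator_one_dotProduct_mulVec_indicator_one [CommSemiring R] (A : Matrix ι ι R)
    (s t : Finset ι) :
    (s : Set ι).indicator 1 ⬝ᵥ A *ᵥ (t : Set ι).indicator 1 = ∑ i ∈ s, ∑ j ∈ t, A i j := by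
  simp only [indicator_one_dotProduct, mulVec, dotProduct_comm (A _)]

namespace Matrix.IsSymm

variable {A : Matrix ι ι ℝ} {u : ι → ℝ} {k c : ℝ}

theorem sub_smul_dotProduct_mulVec_sub_smul (hA : A.IsSymm) (hu : A *ᵥ u = k • u)
    (f g : ι → ℝ) (a b : ℝ) :
    (f - a • u) ⬝ᵥ A *ᵥ (g - b • u) =
      f ⬝ᵥ A *ᵥ g - k * (b * (f ⬝ᵥ u) + a * (g ⬝ᵥ u) - a * b * (u ⬝ᵥ u)) := by
  have huA : u ⬝ᵥ A *ᵥ g = k * (g ⬝ᵥ u) := by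
    rw [dotProduct_mulVec, ← mulVec_transpose, hA.eq, hu, smul_dotProduct, smul_eq_mul,
      dotProduct_comm]
  simp only [mulVec_sub, mulVec_smul, hu, sub_dotProduct, dotProduct_sub, smul_dotProduct,
    dotProduct_smul, huA, smul_eq_mul]
  ring

theorem abs_dotProduct_mulVec_le (hA : A.IsSymm) (hu : A *ᵥ u = k • u)
    (hc : ∀ (μ : ℝ) (x : ι → ℝ), x ≠ 0 → x ⬝ᵥ u = 0 → A *ᵥ x = μ • x → |μ| ≤ c)
    (v : ι → ℝ) {w : ι → ℝ} (hw : w ⬝ᵥ u = 0) :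
    |v ⬝ᵥ A *ᵥ w| ≤ c * √(v ⬝ᵥ v) * √(w ⬝ᵥ w) := by
  classical
  let e : (ι → ℝ) → EuclideanSpace ℝ ι := WithLp.toLp 2
  set T := toEuclideanLin A
  have hT : T.IsSymmetric := by simpa [T] using hA
  have hTe (x : ι → ℝ) : T (e x) = e (A *ᵥ x) := rfl
  have hperp (x : ι → ℝ) : e x ∈ (ℝ ∙ e u)ᗮ ↔ x ⬝ᵥ u = 0 := by
    rw [Submodule.mem_orthogonal_singleton_iff_inner_right, EuclideanSpace.inner_toLp_toLp]
    simp [dotProduct_comm]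
  have hnorm (x : ι → ℝ) : ‖e x‖ = √(x ⬝ᵥ x) := by
    rw [norm_eq_sqrt_real_inner, EuclideanSpace.inner_toLp_toLp, star_trivial]
  have hTw : ‖T (e w)‖ ≤ c * ‖e w‖ := by
    refine hT.norm_apply_le_of_mem_invariant
      (fun x hx ↦ hT.apply_mem_orthogonal_span_singleton (k := k) (by rw [hTe, hu]; rfl) hx)
      (fun μ x hx hx0 hTx ↦ ?_) ((hperp w).mpr hw)
    exact hc μ x.ofLp (by simpa using hx0) ((hperp _).mp hx) (congrArg WithLp.ofLp hTx)
  calc |v ⬝ᵥ A *ᵥ w| = |⟪e v, T (e w)⟫| := by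
        rw [hTe, EuclideanSpace.inner_toLp_toLp]; simp [dotProduct_comm]
    _ ≤ ‖e v‖ * (c * ‖e w‖) := (abs_real_inner_le_norm _ _).trans (by gcongr)
    _ = c * √(v ⬝ᵥ v) * √(w ⬝ᵥ w) := by rw [hnorm, hnorm]; ring

theorem hoffman_cross_bound (hA : A.IsSymm) (hu : A *ᵥ u = k • u)
    (hc : ∀ (μ : ℝ) (x : ι → ℝ), x ≠ 0 → x ⬝ᵥ u = 0 → A *ᵥ x = μ • x → |μ| ≤ c)
    (hu0 : u ⬝ᵥ u ≠ 0) {f g : ι → ℝ} (hfg : f ⬝ᵥ A *ᵥ g ≤ 0) :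
    k * (f ⬝ᵥ u) * (g ⬝ᵥ u) / (u ⬝ᵥ u) ≤
      c * √(f ⬝ᵥ f - (f ⬝ᵥ u) ^ 2 / (u ⬝ᵥ u)) * √(g ⬝ᵥ g - (g ⬝ᵥ u) ^ 2 / (u ⬝ᵥ u)) := by
  have hproj (x : ι → ℝ) : (x - (x ⬝ᵥ u / (u ⬝ᵥ u)) • u) ⬝ᵥ u = 0 := by
    rw [sub_dotProduct, smul_dotProduct, smul_eq_mul, div_mul_cancel₀ _ hu0, sub_self]
  have hnorm (x : ι → ℝ) : (x - (x ⬝ᵥ u / (u ⬝ᵥ u)) • u) ⬝ᵥ (x - (x ⬝ᵥ u / (u ⬝ᵥ u)) • u) =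
      x ⬝ᵥ x - (x ⬝ᵥ u) ^ 2 / (u ⬝ᵥ u) := by
    simp only [sub_dotProduct, dotProduct_sub, smul_dotProduct, dotProduct_smul, smul_eq_mul,
      dotProduct_comm u x]
    field_simp; ring
  have hcross : (f - (f ⬝ᵥ u / (u ⬝ᵥ u)) • u) ⬝ᵥ A *ᵥ (g - (g ⬝ᵥ u / (u ⬝ᵥ u)) • u) =
      f ⬝ᵥ A *ᵥ g - k * (f ⬝ᵥ u) * (g ⬝ᵥ u) / (u ⬝ᵥ u) := by
    rw [hA.sub_smul_dotProduct_mulVec_sub_smul hu]; field_simp; ring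
  have hbound := hA.abs_dotProduct_mulVec_le hu hc (f - (f ⬝ᵥ u / (u ⬝ᵥ u)) • u) (hproj g)
  rw [hnorm, hnorm, hcross] at hbound
  linarith [neg_abs_le (f ⬝ᵥ A *ᵥ g - k * (f ⬝ᵥ u) * (g ⬝ᵥ u) / (u ⬝ᵥ u))]

end Matrix.IsSymm

end

theorem sq_mul_le_of_le_mul_sqrt {k c N a b : ℝ} (hk : 0 ≤ k) (hN : 0 < N)
    (ha : 0 ≤ a) (haN : a ≤ N) (hb : 0 ≤ b) (hbN : b ≤ N)
    (h : k * a * b / N ≤ c * √(a - a ^ 2 / N) * √(b - b ^ 2 / N)) :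
    k ^ 2 * (a * b) ≤ c ^ 2 * ((N - a) * (N - b)) := by
  rcases (mul_nonneg ha hb).eq_or_lt with hab | hab
  · rw [← hab, mul_zero]; exact mul_nonneg (sq_nonneg c) (mul_nonneg (by linarith) (by linarith))
  have hsa : a - a ^ 2 / N = a * (N - a) / N := by field_simp
  have hsb : b - b ^ 2 / N = b * (N - b) / N := by field_simp
  have hsq := pow_le_pow_left₀ (by positivity) h 2
  rw [mul_pow, mul_pow, hsa, hsb,
    Real.sq_sqrt (div_nonneg (mul_nonneg ha (sub_nonneg.2 haN)) hN.le),
    Real.sq_sqrt (div_nonneg (mul_nonneg hb (sub_nonneg.2 hbN)) hN.le)] at hsq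
  have : k ^ 2 * (a * b) * (a * b) ≤ c ^ 2 * ((N - a) * (N - b)) * (a * b) := by
    field_simp at hsq; linarith
  exact le_of_mul_le_mul_right this hab

theorem eq_of_sq_mul_le_of_sqrt_mul_eq {k c N a b : ℝ} (hk : 0 < k) (hc : 0 < c) (hN : 0 < N)
    (ha : 0 ≤ a) (hb : 0 ≤ b) (h : k ^ 2 * (a * b) ≤ c ^ 2 * ((N - a) * (N - b)))
    (heq : √(a * b) = c / (k + c) * N) : a = b := by
  set s := √(a * b)
  have hs : s ^ 2 = a * b := Real.sq_sqrt (mul_nonneg ha hb)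
  have hks : k * s = c * (N - s) := by rw [heq]; field_simp; ring
  have hamgm : (N - s) ^ 2 ≤ (N - a) * (N - b) := by
    have : c ^ 2 * (N - s) ^ 2 ≤ c ^ 2 * ((N - a) * (N - b)) := by
      rw [← mul_pow, ← hks, mul_pow, hs]; exact h
    exact le_of_mul_le_mul_left this (by positivity)
  -- AM-GM gives the reverse inequality, so equality holds, which forces `a + b = 2 * s`.
  have hsum : a + b ≤ 2 * s := by nlinarith
  nlinarith [sq_nonneg (a - b), sq_nonneg (a + b)]

theorem cross_intersecting_hoffman_equality_card_general (n : ℕ) (hn : 0 < n)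
    (G : SimpleGraph (Fin n))
    (A : Matrix (Fin n) (Fin n) ℝ) (hA : A.IsSymm)
    (hNonAdj : ∀ x y : Fin n, x ≠ y → ¬ G.Adj x y → A x y ≤ 0)
    (hDiag : ∀ x : Fin n, A x x = 0)
    (k : ℝ) (hk : 0 < k)
    (hj : A.mulVec (fun _ => (1 : ℝ)) = k • (fun _ => (1 : ℝ)))
    (lamb : ℝ) (hlamb : 0 < lamb)
    (hmax : IsGreatest {t : ℝ | ∃ (l : ℝ) (v : Fin n → ℝ), v ≠ 0 ∧
      v ⬝ᵥ (fun _ => (1 : ℝ)) = 0 ∧ A.mulVec v = l • v ∧ t = |l|} lamb)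
    (Y Z : Finset (Fin n))
    (hYZ : ∀ y ∈ Y, ∀ z ∈ Z, ¬ G.Adj y z)
    (heq : Real.sqrt ((Y.card : ℝ) * (Z.card : ℝ)) = lamb / (k + lamb) * n) :
    Y.card = Z.card := by
  set j : Fin n → ℝ := fun _ ↦ 1
  have hjj : j ⬝ᵥ j = n := by simp [j, dotProduct]
  have hχj (s : Finset (Fin n)) : (s : Set (Fin n)).indicator 1 ⬝ᵥ j = s.card := by
    simp [indicator_one_dotProduct, j]
  have hχχ (s : Finset (Fin n)) :
      (s : Set (Fin n)).indicator 1 ⬝ᵥ (s : Set (Fin n)).indicator 1 = (s.card : ℝ) := by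
    simp +contextual [indicator_one_dotProduct]
  have hYZA : (Y : Set (Fin n)).indicator 1 ⬝ᵥ A *ᵥ (Z : Set (Fin n)).indicator 1 ≤ 0 := by
    rw [indicator_one_dotProduct_mulVec_indicator_one]
    refine Finset.sum_nonpos fun y hy ↦ Finset.sum_nonpos fun z hz ↦ ?_
    rcases eq_or_ne y z with rfl | hne
    · exact (hDiag y).le
    · exact hNonAdj y z hne (hYZ y hy z hz)
  have hN : (0 : ℝ) < n := by exact_mod_cast hn
  have hbound := hA.hoffman_cross_bound hj
    (fun μ x hx hxj hAx ↦ hmax.2 ⟨μ, x, hx, hxj, hAx, rfl⟩) (hjj ▸ hN.ne') hYZA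
  rw [hχj, hχj, hχχ, hχχ, hjj] at hbound
  have hcard (s : Finset (Fin n)) : (s.card : ℝ) ≤ n := by
    exact_mod_cast s.card_le_univ.trans_eq (Fintype.card_fin n)
  have hpoly := sq_mul_le_of_le_mul_sqrt hk.le hN (Nat.cast_nonneg _) (hcard Y)
    (Nat.cast_nonneg _) (hcard Z) hbound
  exact_mod_cast eq_of_sq_mul_le_of_sqrt_mul_eq hk hlamb hN (Nat.cast_nonneg _)
    (Nat.cast_nonneg _) hpoly heq

/-- In the setting of the weighted Hoffman cross-intersecting bound, if equality
`√(|Y|·|Z|) = (λb/(k+λb))·n` holds, then `|Y| = |Z|`. -/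
theorem cross_intersecting_hoffman_equality_card (n : ℕ) (hn : 0 < n)
    (G : SimpleGraph (Fin n))
    (A : Matrix (Fin n) (Fin n) ℝ) (hA : A.IsSymm)
    (hNonAdj : ∀ x y : Fin n, x ≠ y → ¬ G.Adj x y → A x y ≤ 0)
    (hDiag : ∀ x : Fin n, A x x = 0)
    (hA0 : A ≠ 0)
    (k : ℝ) (hk : 0 < k)
    (hj : A.mulVec (fun _ => (1 : ℝ)) = k • (fun _ => (1 : ℝ)))
    (lamb : ℝ) (hlamb : 0 < lamb)
    (hmax : IsGreatest {t : ℝ | ∃ (l : ℝ) (v : Fin n → ℝ), v ≠ 0 ∧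
      v ⬝ᵥ (fun _ => (1 : ℝ)) = 0 ∧ A.mulVec v = l • v ∧ t = |l|} lamb)
    (Y Z : Finset (Fin n))
    (hYZ : ∀ y ∈ Y, ∀ z ∈ Z, ¬ G.Adj y z)
    (heq : Real.sqrt ((Y.card : ℝ) * (Z.card : ℝ)) = lamb / (k + lamb) * n) :
    Y.card = Z.card :=
  cross_intersecting_hoffman_equality_card_general n hn G A hA hNonAdj hDiag k hk hj lamb hlamb hmax
    Y Z hYZ heq
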